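/- Let Td(n; d_1,…,d_r) := Σ_{j=0}^{r} (-1)^{n+r+j} Σ_{1 ≤ k_1 < ⋯ < k_j ≤ r} C(-1 + d_{k_1} + ⋯ + d_{k_j}, n+r) and let d' = (d_1,…,d_{r-1}). Then Td(n; d_1,…,d_r) = Σ_{l=0}^{n} (-1)^{n-l} C(d_r, n-l+1) · Td(l; d'). -/

import Mathlib

open Finset

/-!
Write `A_s(x, m) = ∑_{T ⊆ s} (-1)^|T| C(x + ∑_{i ∈ T} e_i, m)`, so that
`Td(n; d) = (-1)^(n+r) A(-1, n+r)`. Splitting off the last index gives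
`A_{s ∪ {a}}(x, m) = A_s(x, m) - A_s(x + e_a, m)`, and Chu–Vandermonde expands the shifted
term as `A_s(x + c, m) = ∑_k C(c, k) A_s(x, m - k)`. Together these show by induction that
`A_s(x, m) = 0` for `m < |s|` (an `|s|`-fold finite difference of a polynomial of degree `m`).
For the recursion, Vandermonde writes `Td(n; d)` as `∑_{k ≥ 1} C(d_r, k) A(-1, n + r + 1 - k)`
up to sign; the terms with `k ≥ n + 2` vanish, and `k = n - l + 1` gives the `Td(l; d')` term.
-/

/-- Generalized binomial coefficient `C(a, k) = a(a-1)⋯(a-k+1)/k!`. -/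
def gbc (a : ℚ) (k : ℕ) : ℚ :=
  (∏ i ∈ Finset.range k, (a - i)) / (Nat.factorial k)


/-- Todd genus of the complete intersection `X_n(d₁,…,d_r)` via the combinatorial formula. -/
def Td (n r : ℕ) (d : Fin r → ℤ) : ℚ :=
  ∑ S ∈ (Finset.univ : Finset (Fin r)).powerset,
    (-1) ^ (n + r + S.card) * gbc (-1 + ∑ i ∈ S, (d i : ℚ)) (n + r)

lemma gbc_eq_ringChoose (a : ℚ) (k : ℕ) : gbc a k = Ring.choose a k := by
  rw [gbc, Ring.choose_eq_smul, ← Polynomial.aeval_eq_smeval, Polynomial.aeval_def,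
    ← Polynomial.eval_map, descPochhammer_map, descPochhammer_eval_eq_prod_range, smul_eq_mul,
    div_eq_inv_mul]

lemma gbc_add (a b : ℚ) (k : ℕ) :
    gbc (a + b) k = ∑ j ∈ range (k + 1), gbc a j * gbc b (k - j) := by
  simp only [gbc_eq_ringChoose]
  rw [Ring.add_choose_eq k (Commute.all a b), Nat.sum_antidiagonal_eq_sum_range_succ_mk]

lemma gbc_zero (a : ℚ) : gbc a 0 = 1 := by simp [gbc]

section AlternatingChooseSum

variable {ι : Type*}

def alternatingChooseSum (s : Finset ι) (e : ι → ℚ) (x : ℚ) (m : ℕ) : ℚ :=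
  ∑ T ∈ s.powerset, (-1) ^ #T * gbc (x + ∑ i ∈ T, e i) m

variable (s : Finset ι) (e : ι → ℚ) (x : ℚ) (m : ℕ)

lemma alternatingChooseSum_add (c : ℚ) :
    alternatingChooseSum s e (x + c) m =
      ∑ k ∈ range (m + 1), gbc c k * alternatingChooseSum s e x (m - k) := by
  simp only [alternatingChooseSum, mul_sum]
  rw [sum_comm]
  refine sum_congr rfl fun T _ => ?_
  rw [add_right_comm, add_comm, gbc_add, mul_sum]
  exact sum_congr rfl fun k _ => by ring

lemma alternatingChooseSum_add_sub (c : ℚ) :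
    alternatingChooseSum s e (x + c) m - alternatingChooseSum s e x m =
      ∑ k ∈ range m, gbc c (k + 1) * alternatingChooseSum s e x (m - (k + 1)) := by
  rw [alternatingChooseSum_add, sum_range_succ', gbc_zero, one_mul, Nat.sub_zero,
    add_sub_cancel_right]

lemma alternatingChooseSum_insert [DecidableEq ι] {a : ι} (ha : a ∉ s) :
    alternatingChooseSum (insert a s) e x m =
      alternatingChooseSum s e x m - alternatingChooseSum s e (x + e a) m := by
  rw [alternatingChooseSum, sum_powerset_insert ha, sub_eq_add_neg, alternatingChooseSum,
    alternatingChooseSum, ← sum_neg_distrib]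
  congr 1
  refine sum_congr rfl fun T hT => ?_
  have haT : a ∉ T := fun h => ha (mem_powerset.mp hT h)
  rw [card_insert_of_notMem haT, sum_insert haT, ← add_assoc, pow_succ]
  ring

lemma alternatingChooseSum_map {κ : Type*} (f : ι ↪ κ) (g : κ → ℚ) :
    alternatingChooseSum (s.map f) g x m = alternatingChooseSum s (g ∘ f) x m := by
  have hpow : (s.map f).powerset = s.powerset.map (mapEmbedding f).toEmbedding := by
    ext T
    simp only [mem_powerset, mem_map, subset_map_iff, RelEmbedding.coe_toEmbedding,
      mapEmbedding_apply]
    exact ⟨fun ⟨u, hu, h⟩ => ⟨u, hu, h.symm⟩, fun ⟨u, hu, h⟩ => ⟨u, hu, h.symm⟩⟩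
  rw [alternatingChooseSum, hpow, sum_map]
  simp only [RelEmbedding.coe_toEmbedding, mapEmbedding_apply, card_map, sum_map,
    alternatingChooseSum, Function.comp_apply]

lemma alternatingChooseSum_eq_zero [DecidableEq ι] (hm : m < #s) :
    alternatingChooseSum s e x m = 0 := by
  induction s using Finset.induction_on generalizing m with
  | empty => simp at hm
  | @insert a s ha ih =>
    rw [card_insert_of_notMem ha] at hm
    rw [alternatingChooseSum_insert _ _ _ _ ha, ← neg_sub, alternatingChooseSum_add_sub,
      neg_eq_zero]
    exact sum_eq_zero fun k hk => by
      rw [ih _ (by rw [mem_range] at hk; omega), mul_zero]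

end AlternatingChooseSum

lemma Td_eq_alternatingChooseSum (n r : ℕ) (d : Fin r → ℤ) :
    Td n r d = (-1) ^ (n + r) * alternatingChooseSum univ (fun i => (d i : ℚ)) (-1) (n + r) := by
  rw [Td, alternatingChooseSum, mul_sum]
  exact sum_congr rfl fun T _ => by ring

theorem todd_recursion_general (n r : ℕ) (d : Fin (r + 1) → ℤ) :
    Td n (r + 1) d =
      ∑ l ∈ Finset.range (n + 1),
        (-1) ^ (n - l) * gbc ((d (Fin.last r) : ℚ)) (n - l + 1) *
          Td l r (fun i => d i.castSucc) := by
  set b : ℚ := (d (Fin.last r) : ℚ)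
  set A := alternatingChooseSum univ (fun i : Fin r => (d i.castSucc : ℚ)) (-1)
  have hsplit : Td n (r + 1) d =
      (-1) ^ (n + r) * ∑ k ∈ range (n + r + 1), gbc b (k + 1) * A (n + r - k) := by
    rw [Td_eq_alternatingChooseSum, Fin.univ_castSuccEmb, cons_eq_insert,
      alternatingChooseSum_insert _ _ _ _ (by simp), alternatingChooseSum_map,
      alternatingChooseSum_map, ← neg_sub, alternatingChooseSum_add_sub, ← add_assoc, pow_succ]
    simp only [Function.comp_def, Fin.coe_castSuccEmb, Nat.add_sub_add_right, A]
    ring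
  have htrunc : ∑ k ∈ range (n + r + 1), gbc b (k + 1) * A (n + r - k) =
      ∑ k ∈ range (n + 1), gbc b (k + 1) * A (n + r - k) := by
    refine (sum_subset (range_subset_range.2 (by omega)) fun k hk hkn => ?_).symm
    simp only [mem_range] at hk hkn
    have hA : A (n + r - k) = 0 :=
      alternatingChooseSum_eq_zero _ _ _ _ (by simp only [card_univ, Fintype.card_fin]; omega)
    rw [hA, mul_zero]
  rw [hsplit, htrunc, ← sum_range_reflect, mul_sum]
  refine sum_congr rfl fun l hl => ?_
  rw [mem_range] at hl
  rw [Td_eq_alternatingChooseSum, show n + 1 - 1 - l = n - l by omega,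
    show n + r - (n - l) = l + r by omega, show n + r = n - l + (l + r) by omega, pow_add]
  ring

theorem todd_recursion (n r : ℕ) (d : Fin (r + 1) → ℤ) (hd : ∀ i, 0 < d i) :
    Td n (r + 1) d =
      ∑ l ∈ Finset.range (n + 1),
        (-1) ^ (n - l) * gbc ((d (Fin.last r) : ℚ)) (n - l + 1) *
          Td l r (fun i => d i.castSucc) :=
  todd_recursion_general n r d
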